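/- Let G be a finite simple graph with positive real vertex weights ω, and let u, v be non-adjacent vertices of G such that N(u) ⊆ N(v) and ω(u) + ω(v) < ω(N(v)). Let G' be the graph obtained from G by adding the edge {u,v}, and let ω' agree with ω except ω'(v) = ω(v) + ω(u). Then α_{ω'}(G') = α_ω(G). -/

import Mathlib

/-!
Every independent set on either side is matched by one on the other side of at least the same
weight. One of `G ⊔ uv` that contains `v` stays independent in `G` after adding `u`, since
`N(u) ⊆ N(v)`, and the weight `ω(u)` moved onto `v` is recovered; one of `G` containing both `u`
and `v` becomes independent in `G ⊔ uv` after removing `u`, whose weight `v` now carries. Any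
other independent set of `G` is independent in `G ⊔ uv`, where its weight can only grow.
-/

open scoped Classical

/-- `S` is an independent set of vertices in `G`: no two members are adjacent. -/
def IsIndepSet {V : Type*} (G : SimpleGraph V) (S : Finset V) : Prop :=
  ∀ a ∈ S, ∀ b ∈ S, ¬ G.Adj a b

/-- The maximum total `w`-weight of an independent set of `G` contained in `A`
(the weighted independence number of the subgraph of `G` induced on `A`). -/
noncomputable def alphaOn {V : Type*} [Fintype V] (G : SimpleGraph V) (w : V → ℝ)
    (A : Set V) : ℝ :=
  sSup {x : ℝ | ∃ S : Finset V, ↑S ⊆ A ∧ IsIndepSet G S ∧ x = ∑ v ∈ S, w v}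

/-- The maximum total `w`-weight of an independent set of `G`. -/
noncomputable def alpha {V : Type*} [Fintype V] (G : SimpleGraph V) (w : V → ℝ) : ℝ :=
  alphaOn G w Set.univ

/-- `S` is a maximum `w`-weight independent set of `G`. -/
def IsMWIS {V : Type*} [Fintype V] (G : SimpleGraph V) (w : V → ℝ) (S : Finset V) : Prop :=
  IsIndepSet G S ∧ ∑ v ∈ S, w v = alpha G w

/-- The closed neighborhood `N[v]` of a vertex. -/
def closedNbhd {V : Type*} (G : SimpleGraph V) (v : V) : Set V :=
  insert v (G.neighborSet v)

/-- The open neighborhood `N(S)` of a set of vertices. -/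
def setNbhd {V : Type*} (G : SimpleGraph V) (S : Set V) : Set V :=
  (⋃ s ∈ S, G.neighborSet s) \ S

/-- The closed neighborhood `N[S]` of a set of vertices. -/
def closedSetNbhd {V : Type*} (G : SimpleGraph V) (S : Set V) : Set V :=
  setNbhd G S ∪ S

namespace IsIndepSet

variable {V : Type*} {G H : SimpleGraph V} {S T : Finset V}

lemma anti (hGH : G ≤ H) (hS : IsIndepSet H S) : IsIndepSet G S :=
  fun a ha b hb hab => hS a ha b hb (hGH hab)

lemma subset (hS : IsIndepSet G S) (hTS : T ⊆ S) : IsIndepSet G T :=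
  fun a ha b hb => hS a (hTS ha) b (hTS hb)

lemma sup_edge (hS : IsIndepSet G S) {u v : V} (huv : ¬(u ∈ S ∧ v ∈ S)) :
    IsIndepSet (G ⊔ SimpleGraph.edge u v) S := by
  rintro a ha b hb (hab | hab)
  · exact hS a ha b hb hab
  · rcases ((SimpleGraph.edge_adj ..).1 hab).1 with ⟨rfl, rfl⟩ | ⟨rfl, rfl⟩
    exacts [huv ⟨ha, hb⟩, huv ⟨hb, ha⟩]

lemma not_mem_and_mem_of_sup_edge {u v : V} (hne : u ≠ v)
    (hS : IsIndepSet (G ⊔ SimpleGraph.edge u v) S) : ¬(u ∈ S ∧ v ∈ S) :=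
  fun ⟨hu, hv⟩ => hS u hu v hv (Or.inr ((SimpleGraph.edge_adj ..).2 ⟨Or.inl ⟨rfl, rfl⟩, hne⟩))

lemma insert_of_neighborSet_subset [DecidableEq V] (hS : IsIndepSet G S) {u v : V} (hv : v ∈ S)
    (hsub : G.neighborSet u ⊆ G.neighborSet v) : IsIndepSet G (insert u S) := by
  have hu : ∀ b ∈ S, ¬G.Adj u b := fun b hb hub => hS v hv b hb (hsub hub)
  intro a ha b hb hab
  rw [Finset.mem_insert] at ha hb
  rcases ha with rfl | ha
  · rcases hb with rfl | hb
    exacts [G.loopless.irrefl _ hab, hu b hb hab]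
  · rcases hb with rfl | hb
    exacts [hu a ha hab.symm, hS a ha b hb hab]

end IsIndepSet

section Alpha

variable {V : Type*} [Fintype V]

lemma le_alpha {G : SimpleGraph V} {w : V → ℝ} {S : Finset V} (hS : IsIndepSet G S) :
    ∑ x ∈ S, w x ≤ alpha G w := by
  refine le_csSup ((Set.finite_range fun T : Finset V => ∑ x ∈ T, w x).subset ?_).bddAbove
    ⟨S, Set.subset_univ _, hS, rfl⟩
  rintro _ ⟨T, -, -, rfl⟩
  exact ⟨T, rfl⟩

lemma alpha_le_alpha_of_forall_exists {G H : SimpleGraph V} {w w' : V → ℝ}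
    (h : ∀ S, IsIndepSet G S → ∃ T, IsIndepSet H T ∧ ∑ x ∈ S, w x ≤ ∑ x ∈ T, w' x) :
    alpha G w ≤ alpha H w' := by
  refine csSup_le ⟨0, ∅, Set.subset_univ _, fun _ h => absurd h (Finset.notMem_empty _), by simp⟩ ?_
  rintro _ ⟨S, -, hS, rfl⟩
  obtain ⟨T, hT, hST⟩ := h S hS
  exact hST.trans (le_alpha hT)

end Alpha

section UpdateAdd

variable {ι M : Type*} [DecidableEq ι]

lemma Finset.sum_update_add_of_mem [AddCommMonoid M] {f : ι → M} {s : Finset ι} {i : ι}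
    (hi : i ∈ s) (c : M) : ∑ x ∈ s, Function.update f i (f i + c) x = c + ∑ x ∈ s, f x := by
  rw [Finset.sum_update_of_mem hi, Finset.sum_eq_add_sum_sdiff_singleton_of_mem hi f, add_comm (f i),
    add_assoc]

lemma le_update_add [AddCommMonoid M] [PartialOrder M] [IsOrderedAddMonoid M] {f : ι → M}
    {c : M} (hc : 0 ≤ c) (i : ι) : f ≤ Function.update f i (f i + c) := by
  intro x
  rcases eq_or_ne x i with rfl | hx
  · simpa using le_add_of_nonneg_right hc
  · simp [hx]

end UpdateAdd

theorem stmt_3_general {V : Type*} [Fintype V] (G : SimpleGraph V) (w : V → ℝ)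
    (hw : ∀ x, 0 < w x) (u v : V) (hne : u ≠ v)
    (hsub : G.neighborSet u ⊆ G.neighborSet v) :
    alpha (G ⊔ SimpleGraph.fromEdgeSet {s(u, v)}) (Function.update w v (w v + w u)) =
      alpha G w := by
  change alpha (G ⊔ SimpleGraph.edge u v) _ = _
  apply le_antisymm
  · refine alpha_le_alpha_of_forall_exists fun S hS => ?_
    have hGS : IsIndepSet G S := hS.anti le_sup_left
    by_cases hv : v ∈ S
    · have hu : u ∉ S := fun hu => hS.not_mem_and_mem_of_sup_edge hne ⟨hu, hv⟩
      refine ⟨insert u S, hGS.insert_of_neighborSet_subset hv hsub, ?_⟩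
      rw [Finset.sum_update_add_of_mem hv, Finset.sum_insert hu]
    · exact ⟨S, hGS, (Finset.sum_update_of_notMem hv _ _).le⟩
  · refine alpha_le_alpha_of_forall_exists fun S hS => ?_
    by_cases huv : u ∈ S ∧ v ∈ S
    · have hv : v ∈ S.erase u := Finset.mem_erase.2 ⟨hne.symm, huv.2⟩
      refine ⟨S.erase u, (hS.subset (Finset.erase_subset u S)).sup_edge
        fun h => Finset.notMem_erase u S h.1, ?_⟩
      rw [Finset.sum_update_add_of_mem hv, Finset.add_sum_erase S w huv.1]
    · exact ⟨S, hS.sup_edge huv, Finset.sum_le_sum fun x _ => le_update_add (hw u).le v x⟩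

theorem stmt_3 {V : Type*} [Fintype V] (G : SimpleGraph V) (w : V → ℝ)
    (hw : ∀ x, 0 < w x) (u v : V) (hne : u ≠ v) (hnadj : ¬ G.Adj u v)
    (hsub : G.neighborSet u ⊆ G.neighborSet v)
    (hwt : w u + w v < ∑ x ∈ Finset.univ.filter (fun x => G.Adj v x), w x) :
    alpha (G ⊔ SimpleGraph.fromEdgeSet {s(u, v)}) (Function.update w v (w v + w u)) =
      alpha G w :=
  stmt_3_general G w hw u v hne hsub
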